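/- Let P be a probability measure and for r ≥ 0 define B_r(P) as the set of probability measures Q with Q ≪ P and D_{χ²}(Q‖P) ≤ r. If P is a mixture ∑_{k=1}^K π_k P_k with all π_k ≥ α > 0, then for any bounded measurable loss ℓ ≥ 0, max_{k} E_{P_k}[ℓ] ≤ sup_{Q ∈ B_{r_max}(P)} E_Q[ℓ], where r_max = (1/α − 1)². -/

import Mathlib

open MeasureTheory

/-!
Since `P` dominates `π k • P k ≥ α • P k`, the density of `P k` with respect to `P` is at most
`1 / α`. All weights lie in `(0, 1)` and sum to one, so there are at least two of them
and `α ≤ 1 / 2`; hence `1 / α - 1 ≥ 1` and `(f - 1)² ≤ (1 / α - 1)²` on `0 ≤ f ≤ 1 / α`.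
So `P k` itself lies in the χ²-ball of radius `(1 / α - 1)²` around `P`, and the risk under
`P k` is one of the terms of the supremum, which is bounded above by `M`.
-/

lemma le_one_half_of_forall_le_of_sum_eq_one {ι : Type*} [Fintype ι] [DecidableEq ι]
    {π : ι → ℝ} {α : ℝ} (hπ0 : ∀ i, 0 ≤ π i) (hπ1 : ∀ i, π i < 1) (hsum : ∑ i, π i = 1)
    (hα : ∀ i, α ≤ π i) (k : ι) : α ≤ 1 / 2 := by
  rw [← Finset.add_sum_erase _ _ (Finset.mem_univ k)] at hsum
  obtain ⟨j, hj⟩ : (Finset.univ.erase k).Nonempty :=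
    Finset.nonempty_of_sum_ne_zero (f := π) (by linarith [hπ1 k])
  have hj_le : π j ≤ ∑ i ∈ Finset.univ.erase k, π i :=
    Finset.single_le_sum (fun i _ => hπ0 i) hj
  linarith [hα j, hα k]

lemma sq_sub_one_le_sq_sub_one {x b : ℝ} (hx : 0 ≤ x) (hxb : x ≤ b) (hb : 2 ≤ b) :
    (x - 1) ^ 2 ≤ (b - 1) ^ 2 :=
  sq_le_sq' (by linarith) (by linarith)

lemma integral_le_of_ae_norm_le {α : Type*} [MeasurableSpace α] {μ : Measure α}
    [IsProbabilityMeasure μ] {f : α → ℝ} {C : ℝ} (h : ∀ᵐ x ∂μ, ‖f x‖ ≤ C) :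
    ∫ x, f x ∂μ ≤ C :=
  (le_abs_self _).trans (by simpa using norm_integral_le_of_norm_le_const h)

namespace MeasureTheory.Measure

variable {α : Type*} [MeasurableSpace α] {μ ν : Measure α}

lemma rnDeriv_le_inv_of_smul_le [SigmaFinite μ] [SigmaFinite ν] {c : ENNReal} (hc : c ≠ ⊤)
    (h : c • μ ≤ ν) : μ.rnDeriv ν ≤ᵐ[ν] fun _ => c⁻¹ := by
  filter_upwards [rnDeriv_le_one_of_le h, rnDeriv_smul_left_of_ne_top' μ ν hc] with x h1 h2
  rw [h2, Pi.smul_apply, smul_eq_mul, mul_comm] at h1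
  exact ENNReal.le_inv_iff_mul_le.mpr h1

noncomputable def chiSqDiv (μ ν : Measure α) : ℝ :=
  ∫ x, ((μ.rnDeriv ν x).toReal - 1) ^ 2 ∂ν

lemma chiSqDiv_le_of_smul_le [SigmaFinite μ] [IsProbabilityMeasure ν] {c : ℝ} (hc : 0 < c)
    (hc2 : c ≤ 1 / 2) (h : ENNReal.ofReal c • μ ≤ ν) : chiSqDiv μ ν ≤ (1 / c - 1) ^ 2 := by
  have hbound : ∀ᵐ x ∂ν, (μ.rnDeriv ν x).toReal ≤ 1 / c := by
    filter_upwards [rnDeriv_le_inv_of_smul_le ENNReal.ofReal_ne_top h] with x hx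
    have := ENNReal.toReal_mono (by simpa using hc) hx
    rwa [ENNReal.toReal_inv, ENNReal.toReal_ofReal hc.le, inv_eq_one_div] at this
  have h2c : 2 ≤ 1 / c := by rw [le_div_iff₀ hc]; linarith
  refine integral_le_of_ae_norm_le ?_
  filter_upwards [hbound] with x hx
  rw [Real.norm_of_nonneg (sq_nonneg _)]
  exact sq_sub_one_le_sq_sub_one ENNReal.toReal_nonneg hx h2c

end MeasureTheory.Measure

theorem max_group_risk_le_dro_risk_general
    {Ω : Type*} [MeasurableSpace Ω] {K : ℕ}
    (P : Measure Ω) (Pk : Fin K → Measure Ω)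
    [IsProbabilityMeasure P] [∀ k, IsProbabilityMeasure (Pk k)]
    (π : Fin K → ℝ) (hπ : ∀ k, π k ∈ Set.Ioo (0 : ℝ) 1)
    (hsum : ∑ k, π k = 1)
    (hmix : P = Measure.sum (fun k => (ENNReal.ofReal (π k)) • Pk k))
    (α : ℝ) (hα : 0 < α) (hαπ : ∀ k, α ≤ π k)
    (ℓ : Ω → ℝ) (hℓ0 : ∀ x, 0 ≤ ℓ x)
    (M : ℝ) (hℓM : ∀ x, ℓ x ≤ M) :
    ∀ k, ∫ x, ℓ x ∂(Pk k) ≤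
      ⨆ Q : {Q : Measure Ω // IsProbabilityMeasure Q ∧ Q ≪ P ∧
        ∫ x, ((Q.rnDeriv P x).toReal - 1) ^ 2 ∂P ≤ (1 / α - 1) ^ 2},
        ∫ x, ℓ x ∂(Q : Measure Ω) := by
  intro k
  have hα2 : α ≤ 1 / 2 := le_one_half_of_forall_le_of_sum_eq_one (fun i => (hπ i).1.le)
    (fun i => (hπ i).2) hsum hαπ k
  have hdom : ENNReal.ofReal α • Pk k ≤ P := by
    rw [hmix]
    calc ENNReal.ofReal α • Pk k ≤ ENNReal.ofReal (π k) • Pk k := by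
          gcongr; exact hαπ k
      _ ≤ _ := Measure.le_sum (fun i => ENNReal.ofReal (π i) • Pk i) k
  have hac : Pk k ≪ P := (Measure.absolutelyContinuous_smul (by simpa using hα)).trans
    (Measure.absolutelyContinuous_of_le hdom)
  refine le_ciSup (f := fun Q : {Q : Measure Ω // IsProbabilityMeasure Q ∧ Q ≪ P ∧
      ∫ x, ((Q.rnDeriv P x).toReal - 1) ^ 2 ∂P ≤ (1 / α - 1) ^ 2} => ∫ x, ℓ x ∂(Q : Measure Ω))
    ⟨M, ?_⟩ ⟨Pk k, inferInstance, hac, Measure.chiSqDiv_le_of_smul_le hα hα2 hdom⟩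
  rintro _ ⟨⟨Q, hQ, -⟩, rfl⟩
  exact integral_le_of_ae_norm_le (.of_forall fun x => by
    rw [Real.norm_of_nonneg (hℓ0 x)]; exact hℓM x)

/-- If `P = ∑ k, π k • P k` is a mixture with all weights `π k ≥ α > 0`, then for any
bounded measurable nonnegative loss `ℓ`,
`max_k E_{P_k}[ℓ] ≤ sup_{Q : Q ≪ P, D_{χ²}(Q‖P) ≤ (1/α−1)²} E_Q[ℓ]`. -/
theorem max_group_risk_le_dro_risk
    {Ω : Type*} [MeasurableSpace Ω] {K : ℕ}
    (P : Measure Ω) (Pk : Fin K → Measure Ω)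
    [IsProbabilityMeasure P] [∀ k, IsProbabilityMeasure (Pk k)]
    (π : Fin K → ℝ) (hπ : ∀ k, π k ∈ Set.Ioo (0 : ℝ) 1)
    (hsum : ∑ k, π k = 1)
    (hmix : P = Measure.sum (fun k => (ENNReal.ofReal (π k)) • Pk k))
    (α : ℝ) (hα : 0 < α) (hαπ : ∀ k, α ≤ π k)
    (ℓ : Ω → ℝ) (hℓmeas : Measurable ℓ) (hℓ0 : ∀ x, 0 ≤ ℓ x)
    (M : ℝ) (hℓM : ∀ x, ℓ x ≤ M) :
    ∀ k, ∫ x, ℓ x ∂(Pk k) ≤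
      ⨆ Q : {Q : Measure Ω // IsProbabilityMeasure Q ∧ Q ≪ P ∧
        ∫ x, ((Q.rnDeriv P x).toReal - 1) ^ 2 ∂P ≤ (1 / α - 1) ^ 2},
        ∫ x, ℓ x ∂(Q : Measure Ω) :=
  max_group_risk_le_dro_risk_general P Pk π hπ hsum hmix α hα hαπ ℓ hℓ0 M hℓM
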